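/- arXiv:1509.03990 — 2 statements merged into one kernel-verified Lean document; each statement's English description precedes it below -/
import Mathlib

section
/- Let G be a finite simple graph and let x be a half-integral optimal solution to LPVC(G). Then N(V^x_0) = V^x_1: every neighbour of a vertex in V^x_0 lies in V^x_1, and every vertex of V^x_1 has a neighbour in V^x_0. -/
open scoped Classical

/-- A fractional vertex cover of `G`. -/
def IsFVC {V : Type} (G : SimpleGraph V) (x : V → ℝ) : Prop :=
  (∀ v, 0 ≤ x v ∧ x v ≤ 1) ∧ ∀ ⦃u v⦄, G.Adj u v → 1 ≤ x u + x v

/-- The weight of a fractional vertex cover. -/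
noncomputable def fvcWeight {V : Type} [Fintype V] (x : V → ℝ) : ℝ := ∑ v, x v

/-- `LP(G)`: the minimum weight of a fractional vertex cover of `G`. -/
noncomputable def LPopt {V : Type} [Fintype V] (G : SimpleGraph V) : ℝ :=
  sInf {w : ℝ | ∃ x : V → ℝ, IsFVC G x ∧ w = fvcWeight x}

/-- A matching of `G`: a set of pairwise vertex-disjoint edges of `G`. -/
def IsMatchingSet {V : Type} (G : SimpleGraph V) (M : Finset (Sym2 V)) : Prop :=
  (∀ e ∈ M, e ∈ G.edgeSet) ∧ ∀ e ∈ M, ∀ f ∈ M, e ≠ f → ∀ v : V, v ∈ e → v ∉ f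

/-- `MM(G)`: the maximum size of a matching of `G`. -/
noncomputable def MMnum {V : Type} (G : SimpleGraph V) : ℕ :=
  sSup {n : ℕ | ∃ M : Finset (Sym2 V), IsMatchingSet G M ∧ M.card = n}

/-- `OPT(G)`: the minimum size of a vertex cover of `G`. -/
noncomputable def VCnum {V : Type} (G : SimpleGraph V) : ℕ :=
  sInf {n : ℕ | ∃ S : Finset V, (∀ ⦃u v⦄, G.Adj u v → u ∈ S ∨ v ∈ S) ∧ S.card = n}

/-- `N(X)`: the set of vertices outside `X` having a neighbour in `X`. -/
def nbhd {V : Type} (G : SimpleGraph V) (X : Set V) : Set V :=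
  {v | v ∉ X ∧ ∃ u ∈ X, G.Adj u v}

/-- `X` is an independent set in `G`. -/
def IndepSet {V : Type} (G : SimpleGraph V) (X : Set V) : Prop :=
  ∀ u ∈ X, ∀ v ∈ X, ¬ G.Adj u v

/-- `surplus(G) ≥ s`: every nonempty independent set `X` satisfies `|N(X)| ≥ |X| + s`. -/
def SurplusGE {V : Type} (G : SimpleGraph V) (s : ℕ) : Prop :=
  ∀ X : Set V, X.Nonempty → IndepSet G X → X.ncard + s ≤ (nbhd G X).ncard

/-- The matching `M` saturates the vertex `v`. -/
def Saturates {V : Type} (M : Finset (Sym2 V)) (v : V) : Prop := ∃ e ∈ M, v ∈ e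

/-- `O(G)`: vertices left unsaturated by some maximum matching of `G`. -/
def OSet {V : Type} (G : SimpleGraph V) : Set V :=
  {v | ∃ M : Finset (Sym2 V), IsMatchingSet G M ∧ M.card = MMnum G ∧ ¬ Saturates M v}

/-- `I(G)`: vertices outside `O(G)` having a neighbour in `O(G)`. -/
def ISet {V : Type} (G : SimpleGraph V) : Set V := nbhd G (OSet G)

/-- `P(G)`: the remaining vertices. -/
def GEPSet {V : Type} (G : SimpleGraph V) : Set V := (OSet G ∪ ISet G)ᶜ

/-!
If `x v = 0` then every edge at `v` forces its other end to `1`. Conversely, if `x v = 1` but no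
neighbour of `v` has value `0`, then all neighbours have value at least `1/2` by half-integrality,
so lowering `x v` to `1/2` keeps a fractional vertex cover of smaller weight, contradicting
optimality.
-/

variable {V : Type}

theorem IsFVC.eq_one_of_adj_of_eq_zero {G : SimpleGraph V} {x : V → ℝ} (hx : IsFVC G x)
    {u v : V} (huv : G.Adj u v) (hu : x u = 0) : x v = 1 := by
  linarith [hx.2 huv, (hx.1 v).2]

theorem IsFVC.update {G : SimpleGraph V} {x : V → ℝ} (hx : IsFVC G x) {v : V} {a : ℝ}
    (ha₀ : 0 ≤ a) (ha₁ : a ≤ 1) (hnbr : ∀ u, G.Adj u v → 1 - a ≤ x u) :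
    IsFVC G (Function.update x v a) := by
  refine ⟨fun w => ?_, fun u w huw => ?_⟩
  · rcases eq_or_ne w v with rfl | hw
    · simpa using ⟨ha₀, ha₁⟩
    · simpa [hw] using hx.1 w
  · obtain rfl | hu := eq_or_ne u v
    · simpa [huw.ne.symm] using (by linarith [hnbr w huw.symm] : 1 ≤ a + x w)
    obtain rfl | hw := eq_or_ne w v
    · simpa [hu] using (by linarith [hnbr u huw] : 1 ≤ x u + a)
    · simpa [hu, hw] using hx.2 huw

theorem fvcWeight_update [Fintype V] (x : V → ℝ) (v : V) (a : ℝ) :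
    fvcWeight (Function.update x v a) = fvcWeight x - x v + a := by
  simp only [fvcWeight, Finset.sum_update_of_mem (Finset.mem_univ v),
    Finset.sdiff_singleton_eq_erase, ← Finset.add_sum_erase _ x (Finset.mem_univ v)]
  ring

theorem LPopt_le_fvcWeight [Fintype V] {G : SimpleGraph V} {x : V → ℝ} (hx : IsFVC G x) :
    LPopt G ≤ fvcWeight x :=
  csInf_le ⟨0, by rintro w ⟨y, hy, rfl⟩; exact Finset.sum_nonneg fun u _ => (hy.1 u).1⟩
    ⟨x, hx, rfl⟩

/-- For a half-integral optimal LP solution `x`, `N(V^x_0) = V^x_1`. -/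
theorem nbhd_zeros_eq_ones {V : Type} [Fintype V] (G : SimpleGraph V)
    (x : V → ℝ) (hx : IsFVC G x)
    (hhalf : ∀ v, x v = 0 ∨ x v = 1 / 2 ∨ x v = 1)
    (hopt : fvcWeight x = LPopt G) :
    nbhd G {v | x v = 0} = {v | x v = 1} := by
  ext v
  refine ⟨fun ⟨_, u, hu, huv⟩ => hx.eq_one_of_adj_of_eq_zero huv hu, fun (hv : x v = 1) => ?_⟩
  refine ⟨by simp [hv], ?_⟩
  by_contra! hno
  have hnbr : ∀ u, G.Adj u v → 1 - 1 / 2 ≤ x u := fun u huv => by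
    rcases hhalf u with h | h | h
    · exact absurd huv (hno u h)
    all_goals linarith
  have hlower := LPopt_le_fvcWeight (hx.update (by norm_num) (by norm_num) hnbr)
  rw [fvcWeight_update, ← hopt, hv] at hlower
  linarith
end

section
/- Let G be a finite simple graph with surplus(G) ≥ 1, and let Z be a nonempty independent set of G with |N(Z)| = |Z| + 1. Then MM(G − (Z ∪ N(Z))) ≤ MM(G) − |Z|. -/
open scoped Classical

private lemma matching_empty' {V : Type} (G : SimpleGraph V) : IsMatchingSet G ∅ := by
  constructor <;> intro e he <;> simp at he

private lemma mm_bddAbove' {V : Type} [Fintype V] (G : SimpleGraph V) :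
    BddAbove {n : ℕ | ∃ M : Finset (Sym2 V), IsMatchingSet G M ∧ M.card = n} := by
  refine ⟨Fintype.card (Sym2 V), ?_⟩
  rintro n ⟨M, _, rfl⟩
  exact Finset.card_le_univ M

private lemma le_mmnum' {V : Type} [Fintype V] (G : SimpleGraph V) {M : Finset (Sym2 V)}
    (h : IsMatchingSet G M) : M.card ≤ MMnum G :=
  le_csSup (mm_bddAbove' G) ⟨M, h, rfl⟩

private lemma exists_max_matching' {V : Type} [Fintype V] (G : SimpleGraph V) :
    ∃ M : Finset (Sym2 V), IsMatchingSet G M ∧ M.card = MMnum G := by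
  have hne : {n : ℕ | ∃ M : Finset (Sym2 V), IsMatchingSet G M ∧ M.card = n}.Nonempty :=
    ⟨0, ∅, matching_empty' G, rfl⟩
  exact Nat.sSup_mem hne (mm_bddAbove' G)


/-- If `surplus(G) ≥ 1` and `Z` is a nonempty independent set with surplus one,
then `MM(G − (Z ∪ N(Z))) ≤ MM(G) − |Z|`. -/
theorem mm_after_removing_surplus_one_set {V : Type} [Fintype V] (G : SimpleGraph V)
    (hsur : SurplusGE G 1) (Z : Set V) (hZne : Z.Nonempty) (hZind : IndepSet G Z)
    (hZsur : (nbhd G Z).ncard = Z.ncard + 1) :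
    MMnum (G.induce ((Z ∪ nbhd G Z)ᶜ)) + Z.ncard ≤ MMnum G := by
  classical
  set NZ := nbhd G Z with hNZ
  set S : Set V := (Z ∪ NZ)ᶜ with hSdef
  obtain ⟨M', hM', hMcard⟩ := exists_max_matching' (G.induce S)
  -- Hall's condition
  have hall : ∀ s : Finset ↥Z, s.card ≤ (s.biUnion (fun z => G.neighborFinset z.1)).card := by
    intro s
    rcases s.eq_empty_or_nonempty with rfl | hs
    · simp
    · set X : Set V := ↑(s.image (Subtype.val : ↥Z → V)) with hX
      have hXne : X.Nonempty := by
        obtain ⟨z, hz⟩ := hs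
        refine ⟨z.1, ?_⟩
        simp only [hX, Finset.coe_image, Set.mem_image, Finset.mem_coe]
        exact ⟨z, hz, rfl⟩
      have hXZ : X ⊆ Z := by
        intro v hv
        simp only [hX, Finset.coe_image, Set.mem_image, Finset.mem_coe] at hv
        obtain ⟨z, _, rfl⟩ := hv
        exact z.2
      have hXind : IndepSet G X := fun u hu v hv => hZind u (hXZ hu) v (hXZ hv)
      have h1 := hsur X hXne hXind
      have hsub : nbhd G X ⊆ ↑(s.biUnion (fun z => G.neighborFinset z.1)) := by
        rintro v ⟨hvX, u, huX, hadj⟩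
        simp only [hX, Finset.coe_image, Set.mem_image, Finset.mem_coe] at huX
        obtain ⟨z, hz, rfl⟩ := huX
        simp only [Finset.coe_biUnion, Set.mem_iUnion, Finset.mem_coe,
          SimpleGraph.mem_neighborFinset]
        exact ⟨z, hz, hadj⟩
      have h2 : (nbhd G X).ncard ≤ (s.biUnion (fun z => G.neighborFinset z.1)).card := by
        rw [← Set.ncard_coe_finset]
        exact Set.ncard_le_ncard hsub (Finset.finite_toSet _)
      have h3 : X.ncard = s.card := by
        rw [hX, Set.ncard_coe_finset, Finset.card_image_of_injective _ Subtype.val_injective]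
      omega
  obtain ⟨f, hfinj, hf⟩ :=
    (Finset.all_card_le_biUnion_card_iff_exists_injective
      (fun z : ↥Z => G.neighborFinset z.1)).mp hall
  have hadjf : ∀ z : ↥Z, G.Adj z.1 (f z) := fun z => by
    have := hf z
    rwa [SimpleGraph.mem_neighborFinset] at this
  have hfNZ : ∀ z : ↥Z, f z ∈ NZ := by
    intro z
    have hnotZ : f z ∉ Z := fun h => hZind z.1 z.2 (f z) h (hadjf z)
    exact ⟨hnotZ, z.1, z.2, hadjf z⟩
  set E1 : Finset (Sym2 V) := M'.image (Sym2.map (Subtype.val : ↥S → V)) with hE1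
  set E2 : Finset (Sym2 V) := Finset.univ.image (fun z : ↥Z => s(z.1, f z)) with hE2
  have hE1S : ∀ e ∈ E1, ∀ v, v ∈ e → v ∈ S := by
    intro e he v hv
    simp only [hE1, Finset.mem_image] at he
    obtain ⟨e', _, rfl⟩ := he
    rw [Sym2.mem_map] at hv
    obtain ⟨a, _, rfl⟩ := hv
    exact a.2
  have hE2mem : ∀ e ∈ E2, ∃ z : ↥Z, e = s(z.1, f z) := by
    intro e he
    simp only [hE2, Finset.mem_image, Finset.mem_univ, true_and] at he
    obtain ⟨z, rfl⟩ := he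
    exact ⟨z, rfl⟩
  have hE2Z : ∀ e ∈ E2, ∀ v, v ∈ e → v ∈ Z ∪ NZ := by
    intro e he v hv
    obtain ⟨z, rfl⟩ := hE2mem e he
    rw [Sym2.mem_iff] at hv
    rcases hv with rfl | rfl
    · exact Or.inl z.2
    · exact Or.inr (hfNZ z)
  have hdisj : Disjoint E1 E2 := by
    rw [Finset.disjoint_left]
    intro e he1 he2
    obtain ⟨z, rfl⟩ := hE2mem e he2
    have hzS : (z : V) ∈ S := hE1S _ he1 z.1 (Sym2.mem_mk_left _ _)
    exact hzS (Or.inl z.2)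
  have hMmatch : IsMatchingSet G (E1 ∪ E2) := by
    constructor
    · intro e he
      rcases Finset.mem_union.mp he with he | he
      · simp only [hE1, Finset.mem_image] at he
        obtain ⟨e', he', rfl⟩ := he
        have h := hM'.1 e' he'
        revert h
        induction e' using Sym2.ind with
        | _ a b =>
          intro h
          simpa [SimpleGraph.mem_edgeSet] using h
      · obtain ⟨z, rfl⟩ := hE2mem e he
        exact hadjf z
    · intro e he g hg hne v hve hvg
      rcases Finset.mem_union.mp he with he | he <;>
        rcases Finset.mem_union.mp hg with hg | hg
      · simp only [hE1, Finset.mem_image] at he hg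
        obtain ⟨e1, he1, rfl⟩ := he
        obtain ⟨e2, he2, hge⟩ := hg
        subst hge
        have hne' : e1 ≠ e2 := fun h => hne (by rw [h])
        rw [Sym2.mem_map] at hve hvg
        obtain ⟨a, ha, rfl⟩ := hve
        obtain ⟨b, hb, hba⟩ := hvg
        have hab : b = a := Subtype.val_injective hba
        subst hab
        exact hM'.2 e1 he1 e2 he2 hne' b ha hb
      · exact (hE1S e he v hve) (hE2Z g hg v hvg)
      · exact (hE1S g hg v hvg) (hE2Z e he v hve)
      · obtain ⟨z1, rfl⟩ := hE2mem e he
        obtain ⟨z2, rfl⟩ := hE2mem g hg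
        have hz12 : z1 ≠ z2 := fun h => hne (by rw [h])
        rw [Sym2.mem_iff] at hve hvg
        rcases hve with rfl | rfl <;> rcases hvg with h | h
        · exact hz12 (Subtype.ext h)
        · exact (hfNZ z2).1 (by rw [← h]; exact z1.2)
        · exact (hfNZ z1).1 (by rw [h]; exact z2.2)
        · exact hz12 (hfinj h)
  have hinj2 : Function.Injective (fun z : ↥Z => s(z.1, f z)) := by
    intro a b hab
    simp only [Sym2.eq, Sym2.rel_iff', Prod.mk.injEq, Prod.swap_prod_mk] at hab
    rcases hab with ⟨h1, _⟩ | ⟨h1, _⟩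
    · exact Subtype.ext h1
    · exact absurd (by rw [← h1]; exact a.2 : f b ∈ Z) (hfNZ b).1
  have hcardE1 : E1.card = M'.card :=
    Finset.card_image_of_injective _ (Sym2.map.injective Subtype.val_injective)
  have hcardE2 : E2.card = Z.ncard := by
    rw [hE2, Finset.card_image_of_injective _ hinj2, Finset.card_univ]
    simp [Set.ncard_eq_toFinset_card', Set.toFinset_card]
  have hfinal := le_mmnum' G hMmatch
  rw [Finset.card_union_of_disjoint hdisj, hcardE1, hcardE2, hMcard] at hfinal
  exact hfinal
end
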